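/- Let q be a prime power and α : 𝔽_q → 𝔽_q a permutation. Let K_α = ⋃_{i ∈ 𝔽_q} L(i, (0, α(i))) together with one vertical line, and for x ∈ K_α let μ_x be the number of lines L(i,(0,α(i))), i ∈ 𝔽_q, through x. Let Γ_α be the set of maximal collinear subsets of G_α = {(i,α(i)) : i ∈ 𝔽_q} of size at least 2. Then Σ_{x ∈ K_α} C(μ_x − 1, 2) = Σ_{e ∈ Γ_α} C(|e| − 1, 2). -/

import Mathlib

/-!
The points `x` lying on at least two of the lines `L(i, (0, α i))` are in bijection with the
maximal collinear subsets of the graph of `α` with at least two points. This is point–line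
duality: `x ∈ L(i, (0, α i))` says exactly that the graph point `(i, α i)` lies on the
non-vertical line `Y = x.2 - x.1 X`, so the indices `i` of the lines through `x` are the graph
points on one line, and two distinct graph points determine both that line and `x`. Under this
bijection `μ_x = |e|`; the terms with `μ_x ≤ 2` or `|e| ≤ 2` vanish, and so does every term of the
vertical line that lies on no `L(i, (0, α i))`.
-/

open Finset

/-- The line in `F × F` through `p` with (finite) slope `s`. -/
def lineF {F : Type*} [Field F] [Fintype F] [DecidableEq F] (s : F) (p : F × F) :
    Finset (F × F) :=
  Finset.univ.filter fun x => x.2 = p.2 + s * (x.1 - p.1)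

/-- The vertical line in `F × F` with first coordinate `c`. -/
def vertF {F : Type*} [Field F] [Fintype F] [DecidableEq F] (c : F) : Finset (F × F) :=
  Finset.univ.filter fun x => x.1 = c

/-- The line through `p` with slope `s ∈ PG(1,q) = F ∪ {∞}` (`none` = vertical). -/
def lineO {F : Type*} [Field F] [Fintype F] [DecidableEq F] (s : Option F) (p : F × F) :
    Finset (F × F) :=
  match s with
  | some a => lineF a p
  | none => vertF p.1

theorem injective_graph {ι β : Type*} (f : ι → β) : Function.Injective fun i => (i, f i) :=
  Function.LeftInverse.injective (g := Prod.fst) fun _ => rfl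

section Collinear

variable {F : Type*} [Field F]

/-- `Γ_α` is `{e | IsMaximalCollinear G e}` for `G` the graph of `α`. -/
def IsMaximalCollinear (G e : Finset (F × F)) : Prop :=
  e ⊆ G ∧ 2 ≤ e.card ∧ Collinear F (e : Set (F × F)) ∧
    ∀ e' : Finset (F × F), e ⊆ e' → e' ⊆ G → Collinear F (e' : Set (F × F)) → e' = e

theorem collinear_of_forall_snd_eq {s : Set (F × F)} {m k : F}
    (h : ∀ p ∈ s, p.2 = m * p.1 + k) : Collinear F s := by
  rw [collinear_iff_exists_forall_eq_smul_vadd]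
  refine ⟨(0, k), (1, m), fun p hp => ⟨p.1, ?_⟩⟩
  ext <;> simp [h p hp, mul_comm]

theorem Collinear.snd_eq_of_snd_eq {s : Set (F × F)} (hs : Collinear F s)
    {a b c : F × F} (ha : a ∈ s) (hb : b ∈ s) (hc : c ∈ s) (hab : a ≠ b) {m k : F}
    (ha' : a.2 = m * a.1 + k) (hb' : b.2 = m * b.1 + k) : c.2 = m * c.1 + k := by
  obtain ⟨p₀, v, hv⟩ := (collinear_iff_exists_forall_eq_smul_vadd s).1 hs
  obtain ⟨ra, rfl⟩ := hv a ha
  obtain ⟨rb, rfl⟩ := hv b hb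
  obtain ⟨rc, rfl⟩ := hv c hc
  have hr : ra - rb ≠ 0 := sub_ne_zero.2 fun h => hab (by rw [h])
  simp only [vadd_eq_add, Prod.fst_add, Prod.snd_add, Prod.smul_fst, Prod.smul_snd,
    smul_eq_mul] at ha' hb' ⊢
  have hv : v.2 = m * v.1 := mul_left_cancel₀ hr (by linear_combination ha' - hb')
  linear_combination ha' + (rc - ra) * hv

end Collinear

section Graph

variable {F : Type*} [Field F] [Fintype F] [DecidableEq F]

def graphFinset (α : F ≃ F) : Finset (F × F) :=
  univ.image fun i => (i, α i)

/-- `μ_x` is the cardinality of `lineIndices α x`. -/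
def lineIndices (α : F ≃ F) (x : F × F) : Finset F :=
  univ.filter fun i => x ∈ lineF i (0, α i)

/-- The graph points on the line `Y = x.2 - x.1 X` dual to `x`. -/
def dualPoints (α : F ≃ F) (x : F × F) : Finset (F × F) :=
  (lineIndices α x).image fun i => (i, α i)

theorem mem_lineIndices {α : F ≃ F} {x : F × F} {i : F} :
    i ∈ lineIndices α x ↔ α i = -x.1 * i + x.2 := by
  simp only [lineIndices, lineF, mem_filter, mem_univ, true_and]
  constructor <;> intro h <;> linear_combination -h

theorem card_dualPoints (α : F ≃ F) (x : F × F) :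
    (dualPoints α x).card = (lineIndices α x).card :=
  card_image_of_injective _ (injective_graph α)

theorem dualPoints_subset_graphFinset (α : F ≃ F) (x : F × F) :
    dualPoints α x ⊆ graphFinset α :=
  image_subset_image (subset_univ _)

theorem mem_dualPoints_iff_snd_eq {α : F ≃ F} {x p : F × F} (hp : p ∈ graphFinset α) :
    p ∈ dualPoints α x ↔ p.2 = -x.1 * p.1 + x.2 := by
  obtain ⟨i, -, rfl⟩ := mem_image.1 hp
  rw [dualPoints, (injective_graph α).mem_finset_image, mem_lineIndices]

theorem snd_eq_of_mem_dualPoints {α : F ≃ F} {x p : F × F} (hp : p ∈ dualPoints α x) :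
    p.2 = -x.1 * p.1 + x.2 :=
  (mem_dualPoints_iff_snd_eq (dualPoints_subset_graphFinset α x hp)).1 hp

theorem eq_of_mem_lineIndices {α : F ≃ F} {x y : F × F} {i j : F} (hij : i ≠ j)
    (hix : i ∈ lineIndices α x) (hjx : j ∈ lineIndices α x)
    (hiy : i ∈ lineIndices α y) (hjy : j ∈ lineIndices α y) : x = y := by
  rw [mem_lineIndices] at hix hjx hiy hjy
  have h₁ : x.1 = y.1 :=
    mul_left_cancel₀ (sub_ne_zero.2 hij) (by linear_combination hix - hjx - hiy + hjy)
  exact Prod.ext h₁ (by linear_combination hiy - hix + i * h₁)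

theorem isMaximalCollinear_dualPoints {α : F ≃ F} {x : F × F}
    (hx : 2 ≤ (lineIndices α x).card) :
    IsMaximalCollinear (graphFinset α) (dualPoints α x) := by
  refine ⟨dualPoints_subset_graphFinset α x, card_dualPoints α x ▸ hx,
    collinear_of_forall_snd_eq fun p hp => snd_eq_of_mem_dualPoints hp,
    fun e' hsub hG hcol => (Subset.antisymm ?_ hsub)⟩
  obtain ⟨a, ha, b, hb, hab⟩ := one_lt_card.1 ((card_dualPoints α x).symm ▸ hx)
  intro p hp
  exact (mem_dualPoints_iff_snd_eq (hG hp)).2 <| hcol.snd_eq_of_snd_eq (hsub ha) (hsub hb) hp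
    hab (snd_eq_of_mem_dualPoints ha) (snd_eq_of_mem_dualPoints hb)

theorem IsMaximalCollinear.exists_dualPoints_eq {α : F ≃ F} {e : Finset (F × F)}
    (he : IsMaximalCollinear (graphFinset α) e) : ∃ x, dualPoints α x = e := by
  obtain ⟨hG, he2, hcol, hmax⟩ := he
  obtain ⟨a, ha, b, hb, hab⟩ := one_lt_card.1 he2
  obtain ⟨i, -, rfl⟩ := mem_image.1 (hG ha)
  obtain ⟨j, -, rfl⟩ := mem_image.1 (hG hb)
  have hij : j - i ≠ 0 := sub_ne_zero.2 fun h => hab (by rw [h])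
  set m := (α j - α i) / (j - i)
  -- `x` is the point dual to the line of slope `m` through `(i, α i)` and `(j, α j)`
  let x : F × F := (-m, α i - m * i)
  have hsub : e ⊆ dualPoints α x := fun p hp => by
    refine (mem_dualPoints_iff_snd_eq (hG hp)).2 ?_
    simp only [x, neg_neg]
    refine hcol.snd_eq_of_snd_eq ha hb hp hab (by ring) ?_
    simp only [m]
    field_simp
    ring
  exact ⟨x, hmax _ hsub (dualPoints_subset_graphFinset α x)
    (collinear_of_forall_snd_eq fun p hp => snd_eq_of_mem_dualPoints hp)⟩

end Graph

theorem three_le_of_choose_sub_one_two_ne_zero {n : ℕ} (h : (n - 1).choose 2 ≠ 0) : 3 ≤ n := by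
  rw [Ne, Nat.choose_eq_zero_iff] at h
  omega

open Classical in
theorem cooper_correspondence {F : Type*} [Field F] [Fintype F] [DecidableEq F]
    (α : F ≃ F) (c : F) :
    ∑ x ∈ ((Finset.univ : Finset F).biUnion fun i => lineF i (0, α i)) ∪ vertF c,
        Nat.choose (((Finset.univ : Finset F).filter fun i => x ∈ lineF i (0, α i)).card - 1) 2
      = ∑ e ∈ (Finset.univ : Finset (Finset (F × F))).filter (fun e =>
            e ⊆ Finset.univ.image (fun i => (i, α i)) ∧ 2 ≤ e.card ∧
            Collinear F (e : Set (F × F)) ∧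
            ∀ e' : Finset (F × F), e ⊆ e' →
              e' ⊆ Finset.univ.image (fun i => (i, α i)) →
              Collinear F (e' : Set (F × F)) → e' = e),
          Nat.choose (e.card - 1) 2 := by
  change ∑ x ∈ _, ((lineIndices α x).card - 1).choose 2 = _
  have hμ : ∀ x, ((lineIndices α x).card - 1).choose 2 ≠ 0 → 2 ≤ (lineIndices α x).card :=
    fun _ h => Nat.le_of_succ_le (three_le_of_choose_sub_one_two_ne_zero h)
  refine sum_bij_ne_zero (fun x _ _ => dualPoints α x) ?_ ?_ ?_ ?_
  · intro x _ hx
    exact mem_filter.2 ⟨mem_univ _, isMaximalCollinear_dualPoints (hμ x hx)⟩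
  · intro x _ hx y _ _ hxy
    obtain ⟨i, hi, j, hj, hij⟩ := one_lt_card.1 (hμ x hx)
    have hxy' : lineIndices α x = lineIndices α y := image_injective (injective_graph α) hxy
    exact eq_of_mem_lineIndices hij hi hj (hxy' ▸ hi) (hxy' ▸ hj)
  · intro e he he0
    obtain ⟨x, rfl⟩ := IsMaximalCollinear.exists_dualPoints_eq (mem_filter.1 he).2
    rw [card_dualPoints] at he0
    obtain ⟨i, hi⟩ := card_pos.1 (Nat.zero_lt_of_lt (hμ x he0))
    exact ⟨x, mem_union_left _ (mem_biUnion.2 ⟨i, mem_univ _, (mem_filter.1 hi).2⟩), he0, rfl⟩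
  · intro x _ _
    rw [card_dualPoints]
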